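/- For every x ≥ 0, Erdelyi's identity holds: ∫_{1/2}^∞ exp(−x²·z) / (4π·z·√(2z−1)) dz = (1/2)·(1 − Φ(x)), where Φ is the standard normal cumulative distribution function. -/

import Mathlib

open MeasureTheory Real Set

/-- Standard normal cumulative distribution function. -/
noncomputable def stdNormalCdf (x : ℝ) : ℝ :=
  ∫ t in Iic x, (1 / Real.sqrt (2 * π)) * Real.exp (-t ^ 2 / 2)

/-!
Substituting `z = (1 + u²) / 2` turns the integral into
`e^{-x²/2} / (2π) · ∫_{u>0} e^{-x² u²/2} / (1 + u²) du`. Writing `1 / (1 + u²)` as the Laplace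
integral `∫_{v>0} e^{-(1 + u²) v} dv` and exchanging the order of integration, the inner integral
in `u` is a half Gaussian integral, leaving `∫_{v>0} e^{-v} √(π / (x²/2 + v)) / 2 dv`; the
substitution `v = (t² - x²) / 2` turns this into a multiple of the Gaussian tail
`∫_{t>x} e^{-t²/2} dt`.
-/

theorem image_Ioi_sq_sub_div_two {a : ℝ} (ha : 0 ≤ a) (c : ℝ) :
    (fun t : ℝ => (t ^ 2 - c) / 2) '' Ioi a = Ioi ((a ^ 2 - c) / 2) := by
  ext y
  constructor
  · rintro ⟨t, ht, rfl⟩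
    have : a ^ 2 < t ^ 2 := by nlinarith [mem_Ioi.mp ht]
    rw [mem_Ioi]
    linarith
  · intro hy
    have hy : a ^ 2 < 2 * y + c := by rw [mem_Ioi] at hy; linarith
    refine ⟨√(2 * y + c), ?_, ?_⟩
    · rw [mem_Ioi, ← sqrt_sq ha]
      exact sqrt_lt_sqrt (sq_nonneg a) hy
    · simp only
      rw [sq_sqrt ((sq_nonneg a).trans hy.le)]
      ring

theorem integral_Ioi_comp_sq_sub_div_two {a : ℝ} (ha : 0 ≤ a) (c : ℝ) (f : ℝ → ℝ) :
    ∫ y in Ioi ((a ^ 2 - c) / 2), f y = ∫ t in Ioi a, t * f ((t ^ 2 - c) / 2) := by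
  have hderiv : ∀ t ∈ Ioi a, HasDerivWithinAt (fun t : ℝ => (t ^ 2 - c) / 2) t (Ioi a) t :=
    fun t _ => by simpa using (((hasDerivAt_pow 2 t).sub_const c).div_const 2).hasDerivWithinAt
  have hmono : StrictMonoOn (fun t : ℝ => (t ^ 2 - c) / 2) (Ioi a) := fun s hs t ht hst => by
    have : 0 < s := ha.trans_lt hs
    simp only
    nlinarith
  rw [← image_Ioi_sq_sub_div_two ha c,
    integral_image_eq_integral_abs_deriv_smul measurableSet_Ioi hderiv hmono.injOn]
  refine setIntegral_congr_fun measurableSet_Ioi fun t ht => ?_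
  rw [abs_of_pos (ha.trans_lt ht), smul_eq_mul]

theorem integral_Ioi_exp_neg_mul {c : ℝ} (hc : 0 < c) :
    ∫ v in Ioi (0 : ℝ), exp (-c * v) = c⁻¹ := by
  rw [integral_exp_mul_Ioi (neg_neg_of_pos hc)]
  simp

theorem integrable_exp_neg_mul_sq_mul_exp_neg_mul {a : ℝ} (ha : 0 ≤ a) :
    Integrable (fun p : ℝ × ℝ => exp (-a * p.1 ^ 2) * exp (-(1 + p.1 ^ 2) * p.2))
      ((volume.restrict (Ioi 0)).prod (volume.restrict (Ioi 0))) := by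
  refine (integrable_prod_iff (by fun_prop)).2 ⟨.of_forall fun u => ?_, ?_⟩
  · exact (exp_neg_integrableOn_Ioi 0 (by positivity : (0 : ℝ) < 1 + u ^ 2)).const_mul
      (exp (-a * u ^ 2))
  · have hlaplace (u : ℝ) : ∫ v in Ioi (0 : ℝ), exp (-(1 + u ^ 2) * v) = (1 + u ^ 2)⁻¹ :=
      integral_Ioi_exp_neg_mul (by positivity)
    simp only [norm_mul, norm_of_nonneg (exp_pos _).le, integral_const_mul, hlaplace]
    refine integrable_inv_one_add_sq.restrict.mono' (by fun_prop) (.of_forall fun u => ?_)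
    rw [norm_of_nonneg (by positivity)]
    exact mul_le_of_le_one_left (by positivity) (exp_le_one_iff.2 (by nlinarith [sq_nonneg u]))

theorem integral_exp_neg_mul_sq_div_one_add_sq {a : ℝ} (ha : 0 ≤ a) :
    ∫ u in Ioi (0 : ℝ), exp (-a * u ^ 2) / (1 + u ^ 2)
      = ∫ v in Ioi (0 : ℝ), exp (-v) * (√(π / (a + v)) / 2) := by
  calc _ = ∫ u in Ioi (0 : ℝ), ∫ v in Ioi (0 : ℝ),
            exp (-a * u ^ 2) * exp (-(1 + u ^ 2) * v) := by
          congr 1; ext u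
          rw [integral_const_mul, integral_Ioi_exp_neg_mul (by positivity), div_eq_mul_inv]
    _ = ∫ v in Ioi (0 : ℝ), ∫ u in Ioi (0 : ℝ), exp (-a * u ^ 2) * exp (-(1 + u ^ 2) * v) :=
          integral_integral_swap (integrable_exp_neg_mul_sq_mul_exp_neg_mul ha)
    _ = _ := by
          congr 1; ext v
          have hfactor (u : ℝ) : exp (-a * u ^ 2) * exp (-(1 + u ^ 2) * v)
              = exp (-v) * exp (-(a + v) * u ^ 2) := by
            rw [← exp_add, ← exp_add]; ring_nf
          simp only [hfactor, integral_const_mul, integral_gaussian_Ioi]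

theorem integral_exp_neg_sq_div_two_mul_div_one_add_sq {x : ℝ} (hx : 0 ≤ x) :
    ∫ u in Ioi (0 : ℝ), exp (-(x ^ 2 / 2) * u ^ 2) / (1 + u ^ 2)
      = √(2 * π) / 2 * exp (x ^ 2 / 2) * ∫ t in Ioi x, exp (-t ^ 2 / 2) := by
  have hsub := integral_Ioi_comp_sq_sub_div_two hx (x ^ 2)
    fun v => exp (-v) * (√(π / (x ^ 2 / 2 + v)) / 2)
  rw [sub_self, zero_div] at hsub
  rw [integral_exp_neg_mul_sq_div_one_add_sq (by positivity), hsub, ← integral_const_mul]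
  refine setIntegral_congr_fun measurableSet_Ioi fun t ht => ?_
  have ht : 0 < t := hx.trans_lt ht
  have hsqrt : √(π / (x ^ 2 / 2 + (t ^ 2 - x ^ 2) / 2)) = √(2 * π) / t := by
    rw [show π / (x ^ 2 / 2 + (t ^ 2 - x ^ 2) / 2) = 2 * π / t ^ 2 by ring,
      sqrt_div' _ (sq_nonneg t), sqrt_sq ht.le]
  have hexp : exp (-((t ^ 2 - x ^ 2) / 2)) = exp (x ^ 2 / 2) * exp (-t ^ 2 / 2) := by
    rw [← exp_add]; ring_nf
  rw [hsqrt, hexp]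
  field_simp

open ProbabilityTheory in
theorem one_sub_stdNormalCdf (x : ℝ) :
    1 - stdNormalCdf x = (√(2 * π))⁻¹ * ∫ t in Ioi x, exp (-t ^ 2 / 2) := by
  have hpdf : gaussianPDFReal 0 1 = fun t => (√(2 * π))⁻¹ * exp (-t ^ 2 / 2) := by
    ext t; simp [gaussianPDFReal]
  have hint := integrable_gaussianPDFReal 0 1
  have htotal := integral_gaussianPDFReal_eq_one 0 one_ne_zero
  rw [hpdf] at hint htotal
  have hsplit := intervalIntegral.integral_Iic_add_Ioi (b := x) hint.integrableOn hint.integrableOn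
  rw [stdNormalCdf, one_div, ← integral_const_mul]
  linarith

theorem integral_Ioi_one_half_exp_neg_sq_mul_div (x : ℝ) :
    ∫ z in Ioi ((1 : ℝ) / 2), exp (-x ^ 2 * z) / (4 * π * z * √(2 * z - 1))
      = exp (-x ^ 2 / 2) / (2 * π) *
          ∫ u in Ioi (0 : ℝ), exp (-(x ^ 2 / 2) * u ^ 2) / (1 + u ^ 2) := by
  rw [show (1 : ℝ) / 2 = (0 ^ 2 - -1) / 2 by norm_num, integral_Ioi_comp_sq_sub_div_two le_rfl,
    ← integral_const_mul]
  refine setIntegral_congr_fun measurableSet_Ioi fun u hu => ?_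
  rw [show (u ^ 2 - -1) / 2 = (1 + u ^ 2) / 2 by ring]
  have hsqrt : √(2 * ((1 + u ^ 2) / 2) - 1) = u := by
    rw [show 2 * ((1 + u ^ 2) / 2) - 1 = u ^ 2 by ring, sqrt_sq (le_of_lt hu)]
  have hexp : exp (-x ^ 2 * ((1 + u ^ 2) / 2))
      = exp (-x ^ 2 / 2) * exp (-(x ^ 2 / 2) * u ^ 2) := by
    rw [← exp_add]; ring_nf
  have hu : u ≠ 0 := ne_of_gt hu
  have hu' : 1 + u ^ 2 ≠ 0 := by positivity
  rw [hsqrt, hexp]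
  field_simp
  ring

theorem erdelyi_identity (x : ℝ) (hx : 0 ≤ x) :
    ∫ z in Ioi ((1:ℝ)/2),
        Real.exp (-x ^ 2 * z) / (4 * π * z * Real.sqrt (2 * z - 1))
      = (1 / 2) * (1 - stdNormalCdf x) := by
  rw [integral_Ioi_one_half_exp_neg_sq_mul_div, integral_exp_neg_sq_div_two_mul_div_one_add_sq hx,
    one_sub_stdNormalCdf]
  have hsqrt : √(2 * π) ^ 2 = 2 * π := sq_sqrt (by positivity)
  set s := √(2 * π)
  rw [← hsqrt, neg_div, exp_neg]
  field_simp
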